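/- arXiv:math/0211256 — 2 statements merged into one kernel-verified Lean document; each statement's English description precedes it below -/
import Mathlib

section
/- Fix Φ₁, Φ₂, Φ₃ ∈ [0, π). For r₁, r₂, r₃ > 0 with r₁ + r₂ + r₃ < π define ℓ₁ = arccos(cos r₂ cos r₃ + sin r₂ sin r₃ cos Φ₁), ℓ₂ = arccos(cos r₃ cos r₁ + sin r₃ sin r₁ cos Φ₂), ℓ₃ = arccos(cos r₁ cos r₂ + sin r₁ sin r₂ cos Φ₃), and define θ₁ = arccos((cos ℓ₁ − cos ℓ₂ cos ℓ₃)/(sin ℓ₂ sin ℓ₃)), with θ₂, θ₃ defined by cyclic permutation of the indices. Suppose at the point (r₁, r₂, r₃) the lengths ℓ₁, ℓ₂, ℓ₃ satisfy the strict triangle inequalities and ℓ₁ + ℓ₂ + ℓ₃ < 2π. Then the partial derivatives satisfy the symmetry sin(r₂) · ∂θ₁/∂r₂ = sin(r₁) · ∂θ₂/∂r₁ (and similarly for the other pairs of indices). -/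
/-!
Write `gᵢ = cos ℓᵢ` and `V = 1 - g₀² - g₁² - g₂² + 2 g₀ g₁ g₂`, which is positive for a
nondegenerate triangle. By the law of cosines `∂θᵢ/∂gᵢ = -1/√V` and
`∂θᵢ/∂gⱼ = (gₖ - gᵢ gⱼ) / ((1 - gⱼ²) √V)` for `{i, j, k} = {0, 1, 2}`, while the law of cosines
for `ℓₖ` gives `sin rⱼ · ∂gₖ/∂rⱼ = cos rⱼ · gₖ - cos rₘ` when `{j, k, m} = {0, 1, 2}`.
Combining the two, `sin rⱼ · ∂θᵢ/∂rⱼ · (1 - gₖ²) √V` is a polynomial in the `g`'s and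
`cos r`'s which is symmetric in `i` and `j`.
-/

open Real

/-- The spherical distance between the centers of the circles on the unit sphere of radii
`r (i+1)` and `r (i+2)` meeting at exterior angle `Φ i` (indices mod 3). -/
noncomputable def ellS (Φ r : Fin 3 → ℝ) (i : Fin 3) : ℝ :=
  Real.arccos (Real.cos (r (i + 1)) * Real.cos (r (i + 2)) +
    Real.sin (r (i + 1)) * Real.sin (r (i + 2)) * Real.cos (Φ i))

/-- The inner angle at the `i`-th vertex of the spherical triangle with side lengths
`ellS Φ r`, via the spherical law of cosines. -/
noncomputable def thetaS (Φ r : Fin 3 → ℝ) (i : Fin 3) : ℝ :=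
  Real.arccos ((Real.cos (ellS Φ r i) -
      Real.cos (ellS Φ r (i + 1)) * Real.cos (ellS Φ r (i + 2))) /
    (Real.sin (ellS Φ r (i + 1)) * Real.sin (ellS Φ r (i + 2))))

open Function

noncomputable def sphericalAngle (a b c : ℝ) : ℝ :=
  arccos ((a - b * c) / (√(1 - b ^ 2) * √(1 - c ^ 2)))

/-- The Gram determinant of three unit vectors with pairwise inner products `a`, `b`, `c`. -/
def gramDet (a b c : ℝ) : ℝ := 1 - a ^ 2 - b ^ 2 - c ^ 2 + 2 * a * b * c

lemma gramDet_eq_sub_sq (a b c : ℝ) :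
    gramDet a b c = (1 - b ^ 2) * (1 - c ^ 2) - (a - b * c) ^ 2 := by
  unfold gramDet; ring

lemma gramDet_rotate (a b c : ℝ) : gramDet b c a = gramDet a b c := by
  unfold gramDet; ring

lemma gramDet_cos_pos {x y z : ℝ} (hx : x < y + z) (hy : y < z + x) (hz : z < x + y)
    (hp : x + y + z < 2 * π) : 0 < gramDet (cos x) (cos y) (cos z) := by
  have hfac : gramDet (cos x) (cos y) (cos z) =
      (cos (y - z) - cos x) * (cos x - cos (y + z)) := by
    rw [gramDet, cos_sub, cos_add]
    linear_combination (-sin z ^ 2) * sin_sq_add_cos_sq y - (1 - cos y ^ 2) * sin_sq_add_cos_sq z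
  have hx₀ : 0 ≤ x := by linarith
  have hxπ : x ≤ π := by linarith
  have h₁ : cos x < cos (y - z) := by
    rw [← cos_abs (y - z)]
    exact cos_lt_cos_of_nonneg_of_le_pi (abs_nonneg _) hxπ
      (abs_sub_lt_iff.2 ⟨by linarith, by linarith⟩)
  have h₂ : cos (y + z) < cos x := by
    rcases le_or_gt (y + z) π with h | h
    · exact cos_lt_cos_of_nonneg_of_le_pi hx₀ h hx
    · rw [← cos_two_pi_sub]
      exact cos_lt_cos_of_nonneg_of_le_pi hx₀ (by linarith) (by linarith)
  rw [hfac]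
  exact mul_pos (sub_pos.2 h₁) (sub_pos.2 h₂)

lemma hasDerivAt_sqrt_one_sub_sq {b : ℝ → ℝ} {b' x : ℝ} (hb : HasDerivAt b b' x)
    (hb₁ : b x ^ 2 < 1) :
    HasDerivAt (fun y => √(1 - b y ^ 2)) (-(b x * b') / √(1 - b x ^ 2)) x := by
  convert ((hb.fun_pow 2).const_sub 1).sqrt (by linarith) using 1
  field_simp
  ring

lemma hasDerivAt_sphericalAngle {a b c : ℝ → ℝ} {a' b' c' x : ℝ} (ha : HasDerivAt a a' x)
    (hb : HasDerivAt b b' x) (hc : HasDerivAt c c' x) (hb₁ : b x ^ 2 < 1) (hc₁ : c x ^ 2 < 1)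
    (hV : 0 < gramDet (a x) (b x) (c x)) :
    HasDerivAt (fun y => sphericalAngle (a y) (b y) (c y))
      ((-a' + b' * (c x - a x * b x) / (1 - b x ^ 2) + c' * (b x - a x * c x) / (1 - c x ^ 2)) /
        √(gramDet (a x) (b x) (c x))) x := by
  have hb₁' := sub_pos.2 hb₁
  have hc₁' := sub_pos.2 hc₁
  have hu := sqrt_pos.2 hb₁'
  have hv := sqrt_pos.2 hc₁'
  have hu₂ := sq_sqrt hb₁'.le
  have hv₂ := sq_sqrt hc₁'.le
  have hF := (ha.fun_sub (hb.fun_mul hc)).fun_div ((hasDerivAt_sqrt_one_sub_sq hb hb₁).fun_mul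
    (hasDerivAt_sqrt_one_sub_sq hc hc₁)) (mul_pos hu hv).ne'
  set u := √(1 - b x ^ 2)
  set v := √(1 - c x ^ 2)
  have hw := sqrt_pos.2 hV
  set w := √(gramDet (a x) (b x) (c x))
  have hsq : 1 - ((a x - b x * c x) / (u * v)) ^ 2 = (w / (u * v)) ^ 2 := by
    rw [div_pow, div_pow, mul_pow, hu₂, hv₂, sq_sqrt hV.le, gramDet_eq_sub_sq, sub_div,
      div_self (mul_pos hb₁' hc₁').ne']
  have hne : ∀ s : ℝ, s ^ 2 = 1 → (a x - b x * c x) / (u * v) ≠ s := by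
    rintro s hs h
    rw [h, hs, sub_self] at hsq
    exact (pow_pos (div_pos hw (mul_pos hu hv)) 2).ne hsq
  refine ((hasDerivAt_arccos (hne (-1) (by norm_num)) (hne 1 (by norm_num))).comp x hF
    ).congr_deriv ?_
  rw [hsq, sqrt_sq (by positivity), ← hu₂, ← hv₂]
  field_simp
  linear_combination (u ^ 2 * b x * c') * hv₂ + (v ^ 2 * b' * c x) * hu₂

-- The expression is a convex combination of `cos (x - y)` and `cos (x + y)`.
lemma abs_cos_mul_cos_add_sin_mul_sin_mul_le_one (x y φ : ℝ) :
    |cos x * cos y + sin x * sin y * cos φ| ≤ 1 := by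
  have hsub := cos_sub x y
  have hadd := cos_add x y
  have h₁ := neg_one_le_cos φ
  have h₂ := cos_le_one φ
  have h₃ := neg_one_le_cos (x - y)
  have h₄ := cos_le_one (x - y)
  have h₅ := neg_one_le_cos (x + y)
  have h₆ := cos_le_one (x + y)
  rw [abs_le]
  constructor <;> nlinarith [mul_nonneg (sub_nonneg.2 h₁) (sub_nonneg.2 h₃),
    mul_nonneg (sub_nonneg.2 h₂) (sub_nonneg.2 h₅), mul_nonneg (sub_nonneg.2 h₁) (sub_nonneg.2 h₄),
    mul_nonneg (sub_nonneg.2 h₂) (sub_nonneg.2 h₆)]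

lemma exists_hasDerivAt_cos_mul_cos_add_sin_mul_sin_mul (y p x : ℝ) :
    ∃ d, HasDerivAt (fun t => cos t * cos y + sin t * sin y * p) d x ∧
      sin x * d = cos x * (cos x * cos y + sin x * sin y * p) - cos y :=
  ⟨_, ((hasDerivAt_cos x).mul_const _).add (((hasDerivAt_sin x).mul_const _).mul_const _),
    by linear_combination (-cos y) * sin_sq_add_cos_sq x⟩

noncomputable def cosSide (Φ r : Fin 3 → ℝ) (i : Fin 3) : ℝ :=
  cos (r (i + 1)) * cos (r (i + 2)) + sin (r (i + 1)) * sin (r (i + 2)) * cos (Φ i)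

section
variable (Φ r : Fin 3 → ℝ)

lemma cos_ellS (i : Fin 3) : cos (ellS Φ r i) = cosSide Φ r i :=
  have h := abs_le.1 (abs_cos_mul_cos_add_sin_mul_sin_mul_le_one (r (i + 1)) (r (i + 2)) (Φ i))
  cos_arccos h.1 h.2

lemma sin_ellS (i : Fin 3) : sin (ellS Φ r i) = √(1 - cosSide Φ r i ^ 2) :=
  sin_arccos _

lemma thetaS_eq_sphericalAngle (i : Fin 3) :
    thetaS Φ r i = sphericalAngle (cosSide Φ r i) (cosSide Φ r (i + 1)) (cosSide Φ r (i + 2)) := by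
  simp only [thetaS, cos_ellS, sin_ellS, sphericalAngle]

lemma cosSide_update_self (k : Fin 3) (x : ℝ) :
    cosSide Φ (update r k x) k = cosSide Φ r k := by
  have h₁ : k + 1 ≠ k := by fin_cases k <;> decide
  have h₂ : k + 2 ≠ k := by fin_cases k <;> decide
  simp only [cosSide, update_of_ne h₁, update_of_ne h₂]

lemma exists_hasDerivAt_cosSide_update {j k m : Fin 3} (hjk : j ≠ k) (hjm : j ≠ m)
    (hkm : k ≠ m) :
    ∃ d, HasDerivAt (fun x => cosSide Φ (update r j x) k) d (r j) ∧
      sin (r j) * d = cos (r j) * cosSide Φ r k - cos (r m) := by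
  obtain ⟨rfl, rfl⟩ | ⟨rfl, rfl⟩ : j = k + 1 ∧ m = k + 2 ∨ j = k + 2 ∧ m = k + 1 := by
    revert j k m; decide
  · obtain ⟨d, hd, hsin⟩ :=
      exists_hasDerivAt_cos_mul_cos_add_sin_mul_sin_mul (r (k + 2)) (cos (Φ k)) (r (k + 1))
    refine ⟨d, ?_, hsin⟩
    convert hd using 2 with x
    simp only [cosSide, update_self, update_of_ne hjm.symm]
  · obtain ⟨d, hd, hsin⟩ :=
      exists_hasDerivAt_cos_mul_cos_add_sin_mul_sin_mul (r (k + 1)) (cos (Φ k)) (r (k + 2))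
    refine ⟨d, ?_, by rw [hsin, cosSide]; ring⟩
    convert hd using 2 with x
    simp only [cosSide, update_self, update_of_ne hjm.symm]
    ring

theorem sin_mul_deriv_thetaS_update_add_one (i : Fin 3) (hsq : ∀ k, cosSide Φ r k ^ 2 < 1)
    (hV : 0 < gramDet (cosSide Φ r i) (cosSide Φ r (i + 1)) (cosSide Φ r (i + 2))) :
    sin (r (i + 1)) * deriv (fun x => thetaS Φ (update r (i + 1) x) i) (r (i + 1)) =
      sin (r i) * deriv (fun x => thetaS Φ (update r i x) (i + 1)) (r i) := by
  have h₁ : i + 1 ≠ i := by fin_cases i <;> decide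
  have h₂ : i + 2 ≠ i := by fin_cases i <;> decide
  have h₃ : i + 2 ≠ i + 1 := by fin_cases i <;> decide
  have h₁₁ : i + 1 + 1 = i + 2 := by fin_cases i <;> rfl
  have h₁₂ : i + 1 + 2 = i := by fin_cases i <;> rfl
  obtain ⟨d₀, hd₀, hs₀⟩ := exists_hasDerivAt_cosSide_update Φ r h₁ h₃.symm h₂.symm
  obtain ⟨d₂, hd₂, hs₂⟩ := exists_hasDerivAt_cosSide_update Φ r h₃.symm h₁ h₂
  obtain ⟨d₁', hd₁', hs₁'⟩ := exists_hasDerivAt_cosSide_update Φ r h₁.symm h₂.symm h₃.symm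
  obtain ⟨d₂', hd₂', hs₂'⟩ := exists_hasDerivAt_cosSide_update Φ r h₂.symm h₁.symm h₃
  have hL := hasDerivAt_sphericalAngle hd₀ (hasDerivAt_const (r (i + 1)) (cosSide Φ r (i + 1))) hd₂
  have hR := hasDerivAt_sphericalAngle hd₁' hd₂' (hasDerivAt_const (r i) (cosSide Φ r i))
  simp only [update_eq_self] at hL hR
  specialize hL (hsq _) (hsq _) hV
  specialize hR (hsq _) (hsq _) (by rwa [gramDet_rotate])
  simp only [thetaS_eq_sphericalAngle, h₁₁, h₁₂, cosSide_update_self]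
  rw [hL.deriv, hR.deriv, gramDet_rotate (cosSide Φ r i), ← mul_div_assoc, ← mul_div_assoc]
  congr 1
  have hc := (sub_pos.2 (hsq (i + 2))).ne'
  simp only [zero_mul, zero_div, add_zero]
  field_simp
  linear_combination (cosSide Φ r (i + 2) ^ 2 - 1) * hs₀ + (1 - cosSide Φ r (i + 2) ^ 2) * hs₁' +
    (cosSide Φ r (i + 1) - cosSide Φ r (i + 2) * cosSide Φ r i) * hs₂ -
    (cosSide Φ r i - cosSide Φ r (i + 2) * cosSide Φ r (i + 1)) * hs₂'

end

theorem spherical_deriv_symm_general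
    (Φ r : Fin 3 → ℝ)
    (htri : ∀ i, ellS Φ r i < ellS Φ r (i + 1) + ellS Φ r (i + 2))
    (hperim : ellS Φ r 0 + ellS Φ r 1 + ellS Φ r 2 < 2 * π) :
    ∀ i j : Fin 3, i ≠ j →
      Real.sin (r j) * deriv (fun x => thetaS Φ (Function.update r j x) i) (r j) =
      Real.sin (r i) * deriv (fun x => thetaS Φ (Function.update r i x) j) (r i) := by
  have h₀ := htri 0
  have h₁ := htri 1
  have h₂ := htri 2
  simp only [Fin.isValue, Fin.reduceAdd] at h₀ h₁ h₂
  have hsq : ∀ k, cosSide Φ r k ^ 2 < 1 := by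
    intro k
    have hsin : 0 < sin (ellS Φ r k) := by
      apply sin_pos_of_pos_of_lt_pi <;> fin_cases k <;>
        simp only [Fin.zero_eta, Fin.mk_one, Fin.reduceFinMk, Fin.isValue] <;> linarith
    rw [← cos_ellS, cos_sq']
    nlinarith
  have hV : ∀ i, 0 < gramDet (cosSide Φ r i) (cosSide Φ r (i + 1)) (cosSide Φ r (i + 2)) := by
    intro i
    simp only [← cos_ellS]
    apply gramDet_cos_pos <;> fin_cases i <;>
      simp only [Fin.zero_eta, Fin.mk_one, Fin.reduceFinMk, Fin.isValue, Fin.reduceAdd,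
        zero_add] <;> linarith
  intro i j hij
  obtain rfl | rfl : j = i + 1 ∨ i = j + 1 := by revert i j; decide
  · exact sin_mul_deriv_thetaS_update_add_one Φ r i hsq (hV i)
  · exact (sin_mul_deriv_thetaS_update_add_one Φ r j hsq (hV j)).symm

/-- Lemma 2.3 in the spherical background geometry:
`sin (r j) · ∂θ i / ∂r j = sin (r i) · ∂θ j / ∂r i` for all pairs of distinct
indices `i, j`. -/
theorem spherical_deriv_symm
    (Φ r : Fin 3 → ℝ)
    (hΦ : ∀ i, Φ i ∈ Set.Ico 0 π)
    (hr : ∀ i, 0 < r i)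
    (hsum : r 0 + r 1 + r 2 < π)
    (htri : ∀ i, ellS Φ r i < ellS Φ r (i + 1) + ellS Φ r (i + 2))
    (hperim : ellS Φ r 0 + ellS Φ r 1 + ellS Φ r 2 < 2 * π) :
    ∀ i j : Fin 3, i ≠ j →
      Real.sin (r j) * deriv (fun x => thetaS Φ (Function.update r j x) i) (r j) =
      Real.sin (r i) * deriv (fun x => thetaS Φ (Function.update r i x) j) (r i) :=
  spherical_deriv_symm_general Φ r htri hperim
end

section
/- Fix Φ₁, Φ₂, Φ₃ ∈ [0, π/2]. For r₁, r₂, r₃ > 0 define ℓ₁ = arcosh(cosh r₂ cosh r₃ + sinh r₂ sinh r₃ cos Φ₁), ℓ₂ = arcosh(cosh r₃ cosh r₁ + sinh r₃ sinh r₁ cos Φ₂), ℓ₃ = arcosh(cosh r₁ cosh r₂ + sinh r₁ sinh r₂ cos Φ₃), and θ₁ = arccos((cosh ℓ₂ cosh ℓ₃ − cosh ℓ₁)/(sinh ℓ₂ sinh ℓ₃)), with θ₂, θ₃ defined by cyclic permutation of the indices. Then θ₁ + θ₂ + θ₃ tends to π as (r₁, r₂, r₃) tends to (0, 0, 0) within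 the positive octant. -/
/-!
Radii `rᵢ → 0` force the side lengths `ℓᵢ → 0`, and `rⱼ < ℓᵢ ≤ rⱼ + rₖ` (from `0 ≤ cos Φᵢ`) keeps
them the sides of a genuine triangle. For such a triangle, `1 - cos θ` equals
`2 sinh P sinh Q / (sinh u sinh v)` in hyperbolic and `2 P Q / (u v)` in Euclidean geometry, where
`u, v` are the adjacent sides and `P, Q` the half-differences `(w ± (u - v)) / 2`; since
`sinh x / x → 1` the two cosines differ by `o(1)`. As `arccos` is uniformly continuous, the
hyperbolic angles are `o(1)` away from the Euclidean angles of a triangle with the same sides,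
whose sum is `π`.
-/

open Real

/-- The inverse hyperbolic cosine (on `[1, ∞)`). -/
noncomputable def arcosh' (x : ℝ) : ℝ := Real.log (x + Real.sqrt (x ^ 2 - 1))

open Filter Topology Set

theorem arcosh'_eq_arcosh : arcosh' = arcosh := rfl

theorem Real.uniformContinuous_arcsin : UniformContinuous arcsin := by
  have h : UniformContinuous fun x : Icc (-1 : ℝ) 1 => arcsin x :=
    CompactSpace.uniformContinuous_of_continuous (continuous_arcsin.comp continuous_subtype_val)
  simpa only [Function.comp_def, arcsin_projIcc] using
    h.comp (LipschitzWith.projIcc (neg_le_self zero_le_one)).uniformContinuous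

theorem Real.uniformContinuous_arccos : UniformContinuous arccos :=
  uniformContinuous_const.sub uniformContinuous_arcsin

theorem Filter.Tendsto.arccos_sub_arccos {α : Type*} {l : Filter α} {f g : α → ℝ}
    (h : Tendsto (fun x => f x - g x) l (𝓝 0)) :
    Tendsto (fun x => arccos (f x) - arccos (g x)) l (𝓝 0) := by
  have hfg : Tendsto (fun x => (f x, g x)) l (uniformity ℝ) := by
    rw [tendsto_uniformity_iff_dist_tendsto_zero]
    simpa only [dist_eq, Function.comp_def] using (tendsto_zero_iff_abs_tendsto_zero _).1 h
  rw [tendsto_zero_iff_abs_tendsto_zero]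
  simpa only [dist_eq, Function.comp_def] using
    tendsto_uniformity_iff_dist_tendsto_zero.1 (Tendsto.comp uniformContinuous_arccos hfg)

theorem Real.tendsto_sinh_div_self : Tendsto (fun x => sinh x / x) (𝓝[≠] 0) (𝓝 1) := by
  simpa [div_eq_inv_mul] using (hasDerivAt_sinh 0).tendsto_slope_zero

noncomputable def eucCosAngle (u v w : ℝ) : ℝ := (u ^ 2 + v ^ 2 - w ^ 2) / (2 * u * v)

/-- Heron: `16 · area²` of the Euclidean triangle with sides `a, b, c`. -/
def heron (a b c : ℝ) : ℝ := (a + b + c) * (b + c - a) * (c + a - b) * (a + b - c)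

theorem heron_rotate (a b c : ℝ) : heron b c a = heron a b c := by
  unfold heron; ring

theorem one_sub_eucCosAngle_sq {a b c : ℝ} (hb : b ≠ 0) (hc : c ≠ 0) :
    1 - eucCosAngle b c a ^ 2 = heron a b c / (2 * b * c) ^ 2 := by
  unfold eucCosAngle heron
  field_simp
  ring

def IsTriangle (a b c : ℝ) : Prop := a < b + c ∧ b < c + a ∧ c < a + b

namespace IsTriangle

variable {a b c : ℝ}

theorem rotate (h : IsTriangle a b c) : IsTriangle b c a := ⟨h.2.1, h.2.2, h.1⟩

theorem pos (h : IsTriangle a b c) : 0 < a := by linarith [h.2.1, h.2.2]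

theorem heron_pos (h : IsTriangle a b c) : 0 < heron a b c := by
  obtain ⟨h₁, h₂, h₃⟩ := h
  unfold heron
  apply mul_pos (mul_pos (mul_pos _ _) _) _ <;> linarith

theorem eucCosAngle_mem_Icc (h : IsTriangle a b c) : eucCosAngle b c a ∈ Icc (-1) 1 := by
  have hsq : 0 ≤ 1 - eucCosAngle b c a ^ 2 := by
    rw [one_sub_eucCosAngle_sq h.rotate.pos.ne' h.rotate.rotate.pos.ne']
    exact div_nonneg h.heron_pos.le (sq_nonneg _)
  rw [mem_Icc, ← abs_le, ← sq_le_one_iff_abs_le_one]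
  linarith

theorem sin_arccos_eucCosAngle (h : IsTriangle a b c) :
    sin (arccos (eucCosAngle b c a)) = √(heron a b c) / (2 * b * c) := by
  have hb := h.rotate.pos
  have hc := h.rotate.rotate.pos
  rw [sin_arccos, one_sub_eucCosAngle_sq hb.ne' hc.ne', sqrt_div' _ (by positivity),
    sqrt_sq (by positivity)]

/-- The cosines of the angles opposite `a` and `b` sum to `(a + b) (c² - (a - b)²) / (2abc) ≥ 0`. -/
theorem arccos_add_arccos_le_pi (h : IsTriangle a b c) :
    arccos (eucCosAngle b c a) + arccos (eucCosAngle c a b) ≤ π := by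
  have ha := h.pos
  have hb := h.rotate.pos
  have hc := h.rotate.rotate.pos
  have hsum : -eucCosAngle c a b ≤ eucCosAngle b c a := by
    rw [neg_le_iff_add_nonneg, eucCosAngle, eucCosAngle,
      div_add_div _ _ (by positivity) (by positivity)]
    apply div_nonneg _ (by positivity)
    have : 0 ≤ (a + b) * (c + a - b) * (b + c - a) := by
      apply mul_nonneg (mul_nonneg _ _) _ <;> linarith [h.1, h.2.1]
    nlinarith
  have := arccos_le_arccos hsum
  rw [arccos_neg] at this
  linarith

theorem eucAngleSum_eq_pi (h : IsTriangle a b c) :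
    arccos (eucCosAngle b c a) + arccos (eucCosAngle c a b) + arccos (eucCosAngle a b c) = π := by
  have hb := h.rotate.pos
  have hA := h.eucCosAngle_mem_Icc
  have hB := h.rotate.eucCosAngle_mem_Icc
  have hcos : cos (arccos (eucCosAngle b c a) + arccos (eucCosAngle c a b)) =
      -eucCosAngle a b c := by
    rw [cos_add, cos_arccos hA.1 hA.2, cos_arccos hB.1 hB.2, h.sin_arccos_eucCosAngle,
      h.rotate.sin_arccos_eucCosAngle, heron_rotate a b c, div_mul_div_comm, ← sq,
      sq_sqrt h.heron_pos.le]
    have ha := h.pos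
    have hc := h.rotate.rotate.pos
    unfold eucCosAngle heron
    field_simp
    ring
  have := arccos_cos (add_nonneg (arccos_nonneg _) (arccos_nonneg _)) h.arccos_add_arccos_le_pi
  rw [hcos, arccos_neg] at this
  linarith

end IsTriangle

/-- Hyperbolic law of cosines: the cosine of the angle between the sides `u`, `v` of a triangle
with third side `w`. -/
noncomputable def hypCosAngle (u v w : ℝ) : ℝ := (cosh u * cosh v - cosh w) / (sinh u * sinh v)

theorem one_sub_hypCosAngle {u v : ℝ} (w : ℝ) (hu : u ≠ 0) (hv : v ≠ 0) :
    1 - hypCosAngle u v w =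
      2 * sinh ((w + u - v) / 2) * sinh ((w - u + v) / 2) / (sinh u * sinh v) := by
  have hw : cosh w = cosh ((w + u - v) / 2 + (w - u + v) / 2) := by ring_nf
  have huv : cosh u * cosh v - sinh u * sinh v = cosh ((w + u - v) / 2 - (w - u + v) / 2) := by
    rw [← cosh_sub]; ring_nf
  rw [hypCosAngle, one_sub_div (mul_ne_zero (sinh_ne_zero.2 hu) (sinh_ne_zero.2 hv)), hw,
    cosh_add, ← sub_sub_cancel (cosh u * cosh v) (sinh u * sinh v), huv, cosh_sub]
  ring

theorem one_sub_eucCosAngle {u v : ℝ} (w : ℝ) (hu : u ≠ 0) (hv : v ≠ 0) :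
    1 - eucCosAngle u v w = 2 * ((w + u - v) / 2) * ((w - u + v) / 2) / (u * v) := by
  unfold eucCosAngle
  field_simp
  ring

theorem hypCosAngle_sub_eucCosAngle {u v w : ℝ} (hu : u ≠ 0) (hv : v ≠ 0)
    (hP : (w + u - v) / 2 ≠ 0) (hQ : (w - u + v) / 2 ≠ 0) :
    hypCosAngle u v w - eucCosAngle u v w =
      (1 - eucCosAngle u v w) * (1 - sinh ((w + u - v) / 2) / ((w + u - v) / 2) *
        (sinh ((w - u + v) / 2) / ((w - u + v) / 2)) / (sinh u / u * (sinh v / v))) := by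
  have hsu := sinh_ne_zero.2 hu
  have hsv := sinh_ne_zero.2 hv
  rw [← sub_sub_sub_cancel_left _ _ 1, one_sub_hypCosAngle w hu hv, one_sub_eucCosAngle w hu hv]
  generalize (w + u - v) / 2 = P at *
  generalize (w - u + v) / 2 = Q at *
  field_simp

section Limits

variable {α : Type*} {l : Filter α} {a b c : α → ℝ}

theorem Filter.Tendsto.sinh_div_self (ha : Tendsto a l (𝓝 0)) (hpos : ∀ᶠ x in l, 0 < a x) :
    Tendsto (fun x => sinh (a x) / a x) l (𝓝 1) :=
  tendsto_sinh_div_self.comp (tendsto_nhdsWithin_iff.2 ⟨ha, hpos.mono fun _ h => h.ne'⟩)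

theorem tendsto_hypCosAngle_sub_eucCosAngle (ha : Tendsto a l (𝓝 0)) (hb : Tendsto b l (𝓝 0))
    (hc : Tendsto c l (𝓝 0)) (htri : ∀ᶠ x in l, IsTriangle (a x) (b x) (c x)) :
    Tendsto (fun x => hypCosAngle (b x) (c x) (a x) - eucCosAngle (b x) (c x) (a x)) l (𝓝 0) := by
  have hP : Tendsto (fun x => (a x + b x - c x) / 2) l (𝓝 0) := by
    simpa using ((ha.add hb).sub hc).div_const 2
  have hQ : Tendsto (fun x => (a x - b x + c x) / 2) l (𝓝 0) := by
    simpa using ((ha.sub hb).add hc).div_const 2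
  have hPpos : ∀ᶠ x in l, 0 < (a x + b x - c x) / 2 := htri.mono fun _ h => by linarith [h.2.2]
  have hQpos : ∀ᶠ x in l, 0 < (a x - b x + c x) / 2 := htri.mono fun _ h => by linarith [h.2.1]
  have hratio := ((hP.sinh_div_self hPpos).mul (hQ.sinh_div_self hQpos)).div
    ((hb.sinh_div_self (htri.mono fun _ h => h.rotate.pos)).mul
      (hc.sinh_div_self (htri.mono fun _ h => h.rotate.rotate.pos))) (by norm_num)
  have hbdd : IsBoundedUnder (· ≤ ·) l (norm ∘ fun x => 1 - eucCosAngle (b x) (c x) (a x)) := by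
    refine isBoundedUnder_of_eventually_le (a := 2) (htri.mono fun x h => ?_)
    have := h.eucCosAngle_mem_Icc
    simp only [Function.comp_apply, norm_eq_abs, abs_le]
    constructor <;> linarith [this.1, this.2]
  refine Tendsto.congr' ((htri.and (hPpos.and hQpos)).mono fun x ⟨h, hP, hQ⟩ =>
    (hypCosAngle_sub_eucCosAngle h.rotate.pos.ne' h.rotate.rotate.pos.ne' hP.ne' hQ.ne').symm)
    (isBoundedUnder_le_mul_tendsto_zero hbdd ?_)
  simpa using (tendsto_const_nhds (x := (1 : ℝ))).sub hratio

theorem tendsto_hypAngleSum (ha : Tendsto a l (𝓝 0)) (hb : Tendsto b l (𝓝 0))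
    (hc : Tendsto c l (𝓝 0)) (htri : ∀ᶠ x in l, IsTriangle (a x) (b x) (c x)) :
    Tendsto (fun x => arccos (hypCosAngle (b x) (c x) (a x)) +
      arccos (hypCosAngle (c x) (a x) (b x)) + arccos (hypCosAngle (a x) (b x) (c x))) l (𝓝 π) := by
  have hA := (tendsto_hypCosAngle_sub_eucCosAngle ha hb hc htri).arccos_sub_arccos
  have hB := (tendsto_hypCosAngle_sub_eucCosAngle hb hc ha
    (htri.mono fun _ h => h.rotate)).arccos_sub_arccos
  have hC := (tendsto_hypCosAngle_sub_eucCosAngle hc ha hb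
    (htri.mono fun _ h => h.rotate.rotate)).arccos_sub_arccos
  refine Tendsto.congr' (htri.mono fun x h => ?_) (by simpa using ((hA.add hB).add hC).const_add π)
  rw [← h.eucAngleSum_eq_pi]
  ring

end Limits

/-- The distance between the centres of two hyperbolic circles of radii `r`, `r'` meeting at
exterior angle `Φ`. -/
noncomputable def circleCenterDist (r r' Φ : ℝ) : ℝ :=
  arcosh' (cosh r * cosh r' + sinh r * sinh r' * cos Φ)

section CircleCenterDist

variable {r r' Φ : ℝ}

theorem circleCenterDist_comm (r r' Φ : ℝ) : circleCenterDist r r' Φ = circleCenterDist r' r Φ := by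
  simp only [circleCenterDist, mul_comm]

theorem circleCenterDist_le_add (hr : 0 ≤ r) (hr' : 0 ≤ r') : circleCenterDist r r' Φ ≤ r + r' := by
  have hsinh : 0 ≤ sinh r * sinh r' := mul_nonneg (sinh_nonneg_iff.2 hr) (sinh_nonneg_iff.2 hr')
  have hpos : 0 < cosh r * cosh r' + sinh r * sinh r' * cos Φ := by
    nlinarith [cosh_sub r r', cosh_pos (r - r'), neg_one_le_cos Φ]
  rw [← arcosh_cosh (add_nonneg hr hr'), circleCenterDist, arcosh'_eq_arcosh,
    arcosh_le_arcosh hpos (cosh_pos _), cosh_add]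
  nlinarith [cos_le_one Φ]

theorem lt_circleCenterDist (hr : 0 ≤ r) (hr' : 0 < r') (hΦ : 0 ≤ cos Φ) :
    r < circleCenterDist r r' Φ := by
  have hsinh : 0 ≤ sinh r * sinh r' * cos Φ :=
    mul_nonneg (mul_nonneg (sinh_nonneg_iff.2 hr) (sinh_nonneg_iff.2 hr'.le)) hΦ
  have hcosh : cosh r < cosh r * cosh r' :=
    lt_mul_of_one_lt_right (cosh_pos r) (one_lt_cosh.2 hr'.ne')
  calc r = arcosh (cosh r) := (arcosh_cosh hr).symm
    _ < circleCenterDist r r' Φ :=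
      (arcosh_lt_arcosh (cosh_pos r) (by linarith [cosh_pos r])).2 (by linarith)

theorem lt_circleCenterDist' (hr : 0 < r) (hr' : 0 ≤ r') (hΦ : 0 ≤ cos Φ) :
    r' < circleCenterDist r r' Φ :=
  circleCenterDist_comm r r' Φ ▸ lt_circleCenterDist hr' hr hΦ

theorem tendsto_circleCenterDist {α : Type*} {l : Filter α} {f g : α → ℝ} (Φ : ℝ)
    (hf : Tendsto f l (𝓝 0)) (hg : Tendsto g l (𝓝 0)) :
    Tendsto (fun x => circleCenterDist (f x) (g x) Φ) l (𝓝 0) := by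
  have harg : Tendsto (fun x => cosh (f x) * cosh (g x) + sinh (f x) * sinh (g x) * cos Φ) l
      (𝓝 1) := by
    have hcont : Continuous fun p : ℝ × ℝ => cosh p.1 * cosh p.2 + sinh p.1 * sinh p.2 * cos Φ := by
      fun_prop
    simpa [Function.comp_def] using (hcont.tendsto (0, 0)).comp (hf.prodMk_nhds hg)
  have hcont : ContinuousAt arcosh' 1 :=
    (by fun_prop : ContinuousAt (fun x : ℝ => x + √(x ^ 2 - 1)) 1).log (by norm_num)
  rw [show (0 : ℝ) = arcosh' 1 by simp [arcosh']]
  exact hcont.tendsto.comp harg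

end CircleCenterDist

theorem isTriangle_circleCenterDist {r₁ r₂ r₃ Φ₁ Φ₂ Φ₃ : ℝ} (h₁ : 0 < r₁) (h₂ : 0 < r₂)
    (h₃ : 0 < r₃) (hΦ₁ : 0 ≤ cos Φ₁) (hΦ₂ : 0 ≤ cos Φ₂) (hΦ₃ : 0 ≤ cos Φ₃) :
    IsTriangle (circleCenterDist r₂ r₃ Φ₁) (circleCenterDist r₃ r₁ Φ₂)
      (circleCenterDist r₁ r₂ Φ₃) := by
  have := circleCenterDist_le_add (Φ := Φ₁) h₂.le h₃.le
  have := circleCenterDist_le_add (Φ := Φ₂) h₃.le h₁.le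
  have := circleCenterDist_le_add (Φ := Φ₃) h₁.le h₂.le
  have := lt_circleCenterDist h₂.le h₃ hΦ₁
  have := lt_circleCenterDist h₃.le h₁ hΦ₂
  have := lt_circleCenterDist h₁.le h₂ hΦ₃
  have := lt_circleCenterDist' h₂ h₃.le hΦ₁
  have := lt_circleCenterDist' h₃ h₁.le hΦ₂
  have := lt_circleCenterDist' h₁ h₂.le hΦ₃
  exact ⟨by linarith, by linarith, by linarith⟩

/-- Degeneration limit (1) in the proof of Proposition 4.1 (hyperbolic background
geometry): as all three radii shrink to zero, the hyperbolic triangle shrinks to a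
point, becomes asymptotically Euclidean, and its angle sum `θ₁ + θ₂ + θ₃` converges
to `π`. -/
theorem hyperbolic_angle_sum_limit
    (Φ₁ Φ₂ Φ₃ : ℝ)
    (hΦ₁ : Φ₁ ∈ Set.Icc 0 (π / 2)) (hΦ₂ : Φ₂ ∈ Set.Icc 0 (π / 2))
    (hΦ₃ : Φ₃ ∈ Set.Icc 0 (π / 2)) :
    Filter.Tendsto
      (fun p : ℝ × ℝ × ℝ =>
        let r₁ := p.1
        let r₂ := p.2.1
        let r₃ := p.2.2
        let ℓ₁ := arcosh' (Real.cosh r₂ * Real.cosh r₃ +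
          Real.sinh r₂ * Real.sinh r₃ * Real.cos Φ₁)
        let ℓ₂ := arcosh' (Real.cosh r₃ * Real.cosh r₁ +
          Real.sinh r₃ * Real.sinh r₁ * Real.cos Φ₂)
        let ℓ₃ := arcosh' (Real.cosh r₁ * Real.cosh r₂ +
          Real.sinh r₁ * Real.sinh r₂ * Real.cos Φ₃)
        Real.arccos ((Real.cosh ℓ₂ * Real.cosh ℓ₃ - Real.cosh ℓ₁) /
            (Real.sinh ℓ₂ * Real.sinh ℓ₃)) +
          Real.arccos ((Real.cosh ℓ₃ * Real.cosh ℓ₁ - Real.cosh ℓ₂) /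
            (Real.sinh ℓ₃ * Real.sinh ℓ₁)) +
          Real.arccos ((Real.cosh ℓ₁ * Real.cosh ℓ₂ - Real.cosh ℓ₃) /
            (Real.sinh ℓ₁ * Real.sinh ℓ₂)))
      (nhdsWithin (0, 0, 0)
        (Set.Ioi (0 : ℝ) ×ˢ Set.Ioi (0 : ℝ) ×ˢ Set.Ioi (0 : ℝ))) (nhds π) := by
  have hcos : ∀ Φ ∈ Icc 0 (π / 2), 0 ≤ cos Φ := fun Φ hΦ =>
    cos_nonneg_of_mem_Icc ⟨by linarith [hΦ.1, pi_pos], hΦ.2⟩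
  have hpos : ∀ᶠ p : ℝ × ℝ × ℝ in 𝓝[Ioi 0 ×ˢ Ioi 0 ×ˢ Ioi 0] (0, 0, 0),
      0 < p.1 ∧ 0 < p.2.1 ∧ 0 < p.2.2 :=
    eventually_mem_nhdsWithin.mono fun p hp => ⟨hp.1, hp.2.1, hp.2.2⟩
  have hcoord : ∀ f : ℝ × ℝ × ℝ → ℝ, Continuous f → f (0, 0, 0) = 0 →
      Tendsto f (𝓝[Ioi 0 ×ˢ Ioi 0 ×ˢ Ioi 0] (0, 0, 0)) (𝓝 0) := fun f hf hf0 =>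
    tendsto_nhdsWithin_of_tendsto_nhds (hf.tendsto' _ 0 hf0)
  have h₁ := hcoord _ continuous_fst rfl
  have h₂ := hcoord _ (continuous_fst.comp continuous_snd) rfl
  have h₃ := hcoord _ (continuous_snd.comp continuous_snd) rfl
  exact tendsto_hypAngleSum (tendsto_circleCenterDist Φ₁ h₂ h₃)
    (tendsto_circleCenterDist Φ₂ h₃ h₁) (tendsto_circleCenterDist Φ₃ h₁ h₂)
    (hpos.mono fun p hp => isTriangle_circleCenterDist hp.1 hp.2.1 hp.2.2
      (hcos Φ₁ hΦ₁) (hcos Φ₂ hΦ₂) (hcos Φ₃ hΦ₃))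
end
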